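/- Let σ > 0 and λ > 0. The solution of the scalar linear ODE dZ_t/dt = ((t(1+λ)-1)/(t²λ + (1-t)²)) Z_t + ((1-t)/(t²λ + (1-t)²))·μ with Z₀ = z₀ satisfies Z₁ = √λ·z₀ + μ. (This is the rectified flow from N(0,1) to N(μ, λ).) -/

import Mathlib

/-!
Write `D t = t² λ + (1 - t)²`, so that `D' t = 2 (t (1 + λ) - 1)` and `D > 0`. The ODE says
exactly that `(Z t - μ t) / √(D t)` has zero derivative on `[0, 1]`; as `D 0 = 1` and
`D 1 = λ`, comparing the endpoints gives `(Z 1 - μ) / √λ = z₀`.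
-/

open Set

theorem sq_mul_add_one_sub_sq_pos {lam : ℝ} (hlam : 0 < lam) (t : ℝ) :
    0 < t ^ 2 * lam + (1 - t) ^ 2 := by
  rcases eq_or_ne t 0 with rfl | ht
  · norm_num
  · have : 0 < t ^ 2 * lam := by positivity
    positivity

theorem HasDerivAt.div_sqrt_eq_zero {f D : ℝ → ℝ} {f' D' t : ℝ}
    (hf : HasDerivAt f f' t) (hD : HasDerivAt D D' t) (hDpos : 0 < D t)
    (h : 2 * D t * f' = D' * f t) :
    HasDerivAt (fun s => f s / √(D s)) 0 t := by
  have hsqrt_pos : 0 < √(D t) := Real.sqrt_pos.mpr hDpos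
  refine (hf.div (hD.sqrt hDpos.ne') hsqrt_pos.ne').congr_deriv ?_
  have hsq : √(D t) * √(D t) = D t := Real.mul_self_sqrt hDpos.le
  refine div_eq_zero_iff.mpr (Or.inl ?_)
  field_simp
  linear_combination 2 * f' * hsq + h

theorem hasDerivAt_flow_invariant {lam mu t : ℝ} (hlam : 0 < lam) {Z : ℝ → ℝ}
    (hZ : HasDerivAt Z
      ((t * (1 + lam) - 1) / (t ^ 2 * lam + (1 - t) ^ 2) * Z t +
        (1 - t) / (t ^ 2 * lam + (1 - t) ^ 2) * mu) t) :
    HasDerivAt (fun s => (Z s - mu * s) / √(s ^ 2 * lam + (1 - s) ^ 2)) 0 t := by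
  have hDpos := sq_mul_add_one_sub_sq_pos hlam t
  have hD : HasDerivAt (fun s => s ^ 2 * lam + (1 - s) ^ 2) (2 * (t * (1 + lam) - 1)) t := by
    refine (((hasDerivAt_pow 2 t).mul_const lam).add
      (((hasDerivAt_id t).const_sub 1).pow 2)).congr_deriv ?_
    simp only [id]
    ring
  have hlin : HasDerivAt (fun s => mu * s) mu t := by
    simpa using (hasDerivAt_id t).const_mul mu
  refine (hZ.sub hlin).div_sqrt_eq_zero (f := fun s => Z s - mu * s) hD hDpos ?_
  field_simp
  ring

/-- the solution of
dZ_t/dt = ((t(1+λ)-1)/(t²λ + (1-t)²))Z_t + ((1-t)/(t²λ + (1-t)²))μ with Z₀ = z₀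
satisfies Z₁ = √λ z₀ + μ (the rectified flow from N(0,1) to N(μ,λ)). -/
theorem rectified_flow_gaussian_affine
    (lam mu z₀ : ℝ) (hlam : 0 < lam) (Z : ℝ → ℝ)
    (hZ0 : Z 0 = z₀)
    (hODE : ∀ t ∈ Icc (0:ℝ) 1,
      HasDerivAt Z
        ((t * (1 + lam) - 1) / (t ^ 2 * lam + (1 - t) ^ 2) * Z t +
          (1 - t) / (t ^ 2 * lam + (1 - t) ^ 2) * mu) t) :
    Z 1 = Real.sqrt lam * z₀ + mu := by
  set g : ℝ → ℝ := fun s => (Z s - mu * s) / √(s ^ 2 * lam + (1 - s) ^ 2)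
  have hg : ∀ t ∈ Icc (0:ℝ) 1, HasDerivAt g 0 t := fun t ht =>
    hasDerivAt_flow_invariant hlam (hODE t ht)
  have hg_const : g 1 = g 0 :=
    constant_of_has_deriv_right_zero (fun t ht => (hg t ht).continuousAt.continuousWithinAt)
      (fun t ht => (hg t (Ico_subset_Icc_self ht)).hasDerivWithinAt) 1 (by norm_num)
  have hsqrt_pos : 0 < √lam := Real.sqrt_pos.mpr hlam
  simp only [g, hZ0] at hg_const
  norm_num at hg_const
  field_simp at hg_const
  linarith
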